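/- Let p, q ∈ ℝ be constants, let (a_n)_{n≥0} be a real sequence, and let (a_n^k) satisfy a_n^0 = a_n and a_n^k = p·k·a_n^{k−1} + q·k·a_{n+1}^{k−1} for n ≥ 0, k ≥ 1. Then the exponential generating function of the final sequence satisfies Ā(t) = (1/(1−p t)) · a( q t/(1−p t) ) as formal power series in ℝ⟦t⟧; equivalently, for every k ≥ 0, a_0^k = k! · Σ_{ℓ=0}^{k} binom(k,ℓ) · p^{k−ℓ} · q^ℓ · a_ℓ^0. -/

import Mathlib

/-!
With `E = LinearMap.funLeft R R Nat.succ` the shift `(E b) n = b (n + 1)`, the recurrence says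
that the column `a (·, k + 1)` is `(k + 1) (p + q E)` applied to the column `a (·, k)`, so
`a (·, k) = k! (p + q E)^k a₀`; expanding `(p + q E)^k` by the binomial theorem gives the closed
form. On the generating-function side,
`(1 - p t)⁻¹ (q t / (1 - p t))^ℓ = q^ℓ t^ℓ (1 - p t)^{-(ℓ+1)}`
has `t^k`-coefficient `binom(k, ℓ) p^{k-ℓ} q^ℓ`, so the closed form is exactly the coefficient of
`t^k` in `(1 - p t)⁻¹ a(q t / (1 - p t))`.
-/

open PowerSeries

/-- Formal substitution of the power series `f` into the power series `g`: the series
`g(f(t))`. For `f` with zero constant term (the case used here), the coefficient of `t^n`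
in `g(f(t))` is `Σ_{k ≤ n} (coeff k g) · (coeff n (f^k))`. -/
noncomputable def substPS (f g : PowerSeries ℝ) : PowerSeries ℝ :=
  PowerSeries.mk fun n =>
    ∑ k ∈ Finset.range (n + 1), PowerSeries.coeff k g * PowerSeries.coeff n (f ^ k)

section Recurrence

variable {R : Type*} [CommSemiring R]

theorem funLeft_succ_pow_apply (m : ℕ) (b : ℕ → R) (n : ℕ) :
    ((LinearMap.funLeft R R Nat.succ ^ m) b) n = b (n + m) := by
  induction m generalizing n with
  | zero => rfl
  | succ m ih =>
    rw [pow_succ', Module.End.mul_apply, LinearMap.funLeft_apply, ih, Nat.succ_add]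
    rfl

theorem smul_one_add_smul_funLeft_succ_pow_apply_zero (p q : R) (k : ℕ) (b : ℕ → R) :
    (((p • 1 + q • LinearMap.funLeft R R Nat.succ) ^ k) b) 0 =
      ∑ ℓ ∈ Finset.range (k + 1), (k.choose ℓ : R) * p ^ (k - ℓ) * q ^ ℓ * b ℓ := by
  have hcomm : Commute (q • LinearMap.funLeft R R Nat.succ) (p • 1) :=
    ((Commute.one_right _).smul_right p).smul_left q
  rw [add_comm, hcomm.add_pow, LinearMap.sum_apply, Finset.sum_apply]
  refine Finset.sum_congr rfl fun ℓ _ => ?_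
  simp only [smul_pow, one_pow, Algebra.mul_smul_comm, mul_one, Algebra.smul_mul_assoc,
    LinearMap.smul_apply, Module.End.mul_apply, Module.End.natCast_apply, nsmul_eq_mul,
    Pi.smul_apply, funLeft_succ_pow_apply, zero_add, Pi.mul_apply, Pi.natCast_apply, smul_eq_mul]
  ring

theorem eq_factorial_smul_pow_apply (p q : R) (a₀ : ℕ → R) (a : ℕ → ℕ → R)
    (h0 : ∀ n, a n 0 = a₀ n)
    (hrec : ∀ n k, a n (k + 1) = p * ((k : R) + 1) * a n k + q * ((k : R) + 1) * a (n + 1) k)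
    (k : ℕ) :
    (fun n => a n k) = k.factorial • ((p • 1 + q • LinearMap.funLeft R R Nat.succ) ^ k) a₀ := by
  induction k with
  | zero => funext n; simp [h0]
  | succ k ih =>
    have hstep : (fun n => a n (k + 1)) =
        (k + 1) • (p • 1 + q • LinearMap.funLeft R R Nat.succ) (fun n => a n k) := by
      funext n
      simp only [hrec, LinearMap.add_apply, LinearMap.smul_apply, Module.End.one_apply,
        Pi.smul_apply, Pi.add_apply, smul_eq_mul, LinearMap.funLeft_apply, Nat.succ_eq_add_one,
        smul_add, nsmul_eq_mul, Nat.cast_add, Nat.cast_one]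
      ring
    rw [hstep, ih, map_nsmul, smul_smul, pow_succ', Module.End.mul_apply, Nat.factorial_succ]

theorem apply_zero_eq_factorial_mul_sum (p q : R) (a₀ : ℕ → R) (a : ℕ → ℕ → R)
    (h0 : ∀ n, a n 0 = a₀ n)
    (hrec : ∀ n k, a n (k + 1) = p * ((k : R) + 1) * a n k + q * ((k : R) + 1) * a (n + 1) k)
    (k : ℕ) :
    a 0 k = k.factorial *
      ∑ ℓ ∈ Finset.range (k + 1), (k.choose ℓ : R) * p ^ (k - ℓ) * q ^ ℓ * a₀ ℓ := by
  rw [← smul_one_add_smul_funLeft_succ_pow_apply_zero, ← nsmul_eq_mul, ← Pi.smul_apply,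
    ← eq_factorial_smul_pow_apply p q a₀ a h0 hrec]

end Recurrence

section Geometric

variable {k : Type*} [Field k]

theorem inv_one_sub_C_mul_X (p : k) : (1 - C p * X)⁻¹ = rescale p (mk 1) := by
  rw [PowerSeries.inv_eq_iff_mul_eq_one (by simp)]
  simpa [rescale_X] using congrArg (rescale p) (mk_one_mul_one_sub_eq_one (S := k))

theorem coeff_inv_one_sub_C_mul_X_mul_pow (p q : k) (n ℓ : ℕ) :
    coeff n ((1 - C p * X)⁻¹ * (C q * X * (1 - C p * X)⁻¹) ^ ℓ) =
      (n.choose ℓ : k) * p ^ (n - ℓ) * q ^ ℓ := by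
  have hfactor : (1 - C p * X)⁻¹ * (C q * X * (1 - C p * X)⁻¹) ^ ℓ =
      C (q ^ ℓ) * (X ^ ℓ * rescale p (mk 1 ^ (ℓ + 1))) := by
    rw [map_pow, map_pow, ← inv_one_sub_C_mul_X]
    ring
  rw [hfactor, coeff_C_mul, coeff_X_pow_mul', mk_one_pow_eq_mk_choose_add, coeff_rescale,
    coeff_mk]
  split_ifs with h
  · rw [Nat.add_sub_cancel' h]; ring
  · simp [Nat.choose_eq_zero_of_lt (not_le.mp h)]

end Geometric

theorem coeff_mul_substPS {f : PowerSeries ℝ} (hf : X ∣ f) (h g : PowerSeries ℝ) (n : ℕ) :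
    coeff n (h * substPS f g) = ∑ ℓ ∈ Finset.range (n + 1), coeff ℓ g * coeff n (h * f ^ ℓ) := by
  have hpow : ∀ ℓ j, j < ℓ → coeff j (f ^ ℓ) = 0 := fun ℓ =>
    X_pow_dvd_iff.mp (pow_dvd_pow_of_dvd hf ℓ)
  have hext : ∀ j ∈ Finset.range (n + 1), coeff j (substPS f g) =
      ∑ ℓ ∈ Finset.range (n + 1), coeff ℓ g * coeff j (f ^ ℓ) := by
    intro j hj
    rw [substPS, coeff_mk]
    refine Finset.sum_subset (Finset.range_subset_range.mpr (by simpa using hj)) fun ℓ _ hℓ => ?_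
    rw [hpow ℓ j (by simpa using hℓ), mul_zero]
  simp only [coeff_mul, Finset.mul_sum]
  rw [Finset.sum_comm]
  refine Finset.sum_congr rfl fun x hx => ?_
  rw [hext x.2 (Finset.mem_range_succ_iff.mpr (Finset.HasAntidiagonal.antidiagonal.snd_le hx)),
    Finset.mul_sum]
  exact Finset.sum_congr rfl fun ℓ _ => by ring

/-- Theorem 2.10: if `a_n^k = pk a_n^{k-1} + qk a_{n+1}^{k-1}`, then the exponential
generating function of the final sequence is `(1/(1-pt)) a(qt/(1-pt))`; equivalently
`a_0^k = k! Σ_ℓ binom(k,ℓ) p^{k-ℓ} q^ℓ a_ℓ^0`. -/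
theorem egf_final_eq (p q : ℝ) (a₀ : ℕ → ℝ) (a : ℕ → ℕ → ℝ)
    (h0 : ∀ n, a n 0 = a₀ n)
    (hrec : ∀ n k, a n (k + 1) =
      p * ((k : ℝ) + 1) * a n k + q * ((k : ℝ) + 1) * a (n + 1) k) :
    PowerSeries.mk (fun k => a 0 k / k.factorial) =
      (1 - PowerSeries.C p * X)⁻¹ *
        substPS (PowerSeries.C q * X * (1 - PowerSeries.C p * X)⁻¹)
          (PowerSeries.mk fun n => a₀ n) ∧
    ∀ k, a 0 k = (k.factorial : ℝ) * ∑ ℓ ∈ Finset.range (k + 1),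
      (k.choose ℓ : ℝ) * p ^ (k - ℓ) * q ^ ℓ * a₀ ℓ := by
  have hfinal := apply_zero_eq_factorial_mul_sum p q a₀ a h0 hrec
  refine ⟨?_, hfinal⟩
  have hX : X ∣ C q * X * (1 - C p * X)⁻¹ := (dvd_mul_left X (C q)).mul_right _
  ext k
  rw [coeff_mk, hfinal k, mul_div_cancel_left₀ _ (by positivity), coeff_mul_substPS hX]
  refine Finset.sum_congr rfl fun ℓ _ => ?_
  rw [coeff_mk, coeff_inv_one_sub_C_mul_X_mul_pow]
  ring
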